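/- Let μ be a probability distribution on 𝒳^{M+1} with μ(z, Z) > 0 for all (z, Z), fix S* ⊆ {1,…,M} and a ∈ ℝ, and for each E ∈ 𝒳^{S*} define the reweighted distribution μ̃_E(z, Z) = μ(z, Z)·exp(a·1{Z_{−S*} = E}) / Σ_{z′,Z′} μ(z′, Z′)·exp(a·1{Z′_{−S*} = E}), the scalar r(E) = ( 1 + μ(Z_{−S*} = E)·(e^a − 1) )^{−1}, and J(E) = Σ_{k=1}^{d} ( μ(z=e_k | Z_{−S*}=E) − μ(z=e_k) )² / ( (1 − r(E))·μ(z=e_k | Z_{−S*}=E) + r(E)·μ(z=e_k) ). Then: (i) the marginal of μ̃_E satisfies μ̃_E(z = ·) = r(E)·μ(z = ·) + (1 − r(E))·μ(z = · | Z_{−S*} = E); (ii) μ̃_E(Z_{−S*} = E) = e^a·r(E)·μ(Z_{−S*} = E); and (iii) Σ_{E∈𝒳^{S*}} μ(Z_{−S*}=E) · [ Σ_{k=1}^{d} μ(z=e_k | Z_{−S*}=E)·μ̃_E(z=e_k, Z_{−S*}=E) / μ̃_E(z=e_k) − μ̃_E(Z_{−S*}=E) ] = Σ_{E∈𝒳^{S*}}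 J(E) · e^a · r(E)³ · μ(Z_{−S*}=E)². -/

import Mathlib

/-!
Tilting by `exp (a·1{Z_{-S} = E})` multiplies the mass of the event `{Z_{-S} = E}` by `e^a` and
renormalises by `1 + μ(Z_{-S} = E)(e^a - 1) = r(E)⁻¹`, so the tilted mass of any event is an
explicit combination of untilted masses; (i) and (ii) are this computation. For (iii), write
`c_k = μ(z = e_k | Z_{-S} = E)`, `t_k = μ(z = e_k)` and `D_k = (1 - r) c_k + r t_k` (the tilted
token marginal, by (i)). The difference of squares
`c_k² - r²(c_k - t_k)² = D_k (c_k + r(c_k - t_k))` together with `∑ c_k = ∑ t_k = 1` gives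
`∑ c_k² / D_k = 1 + r² J(E)`.
-/

open Finset

/-- The tuple `(x_{l0-s})_{s ∈ S}` of tokens at offsets `S` before position `l0` (0-based). -/
def parents (d T : ℕ) (S : Finset ℕ) (x : Fin T → Fin d) (l0 : ℕ) (hl : l0 < T) :
    {s // s ∈ S} → Fin d :=
  fun s => x ⟨l0 - s.1, lt_of_le_of_lt (Nat.sub_le _ _) hl⟩

/-- The window `Y_{l0} = (x_{l0}, (x_{l0-s})_{s ∈ S})` (0-based position `l0`). -/
def window (d T : ℕ) (S : Finset ℕ) (x : Fin T → Fin d) (l0 : ℕ) (hl : l0 < T) :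
    Fin d × ({s // s ∈ S} → Fin d) :=
  (x ⟨l0, hl⟩, parents d T S x l0 hl)

/-- The law of the window `Y_{l0}` when the full sequence is distributed as `q`. -/
noncomputable def windowLaw (d T : ℕ) (S : Finset ℕ) (q : (Fin T → Fin d) → ℝ)
    (l0 : ℕ) (hl : l0 < T) (w : Fin d × ({s // s ∈ S} → Fin d)) : ℝ :=
  ∑ x : Fin T → Fin d, if window d T S x l0 hl = w then q x else 0

/-- The single-token marginal at the last coordinate of a distribution on `𝒳^{M+1}`. -/
noncomputable def tokenMarg (d M : ℕ) (μb : (Fin (M + 1) → Fin d) → ℝ) (e : Fin d) : ℝ :=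
  ∑ y : Fin (M + 1) → Fin d, if y ⟨M, Nat.lt_succ_self M⟩ = e then μb y else 0

/-- The reweighted distribution `μ̃_E(z, Z) ∝ μ(z, Z)·exp(a·1{Z_{-S} = E})` on `𝒳^{M+1}`. -/
noncomputable def rew (d M : ℕ) (S : Finset ℕ) (a : ℝ)
    (μb : (Fin (M + 1) → Fin d) → ℝ) (E : {s // s ∈ S} → Fin d)
    (y : Fin (M + 1) → Fin d) : ℝ :=
  μb y * Real.exp (a * (if parents d (M + 1) S y M (Nat.lt_succ_self M) = E then 1 else 0)) /
    ∑ y' : Fin (M + 1) → Fin d,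
      μb y' *
        Real.exp (a * (if parents d (M + 1) S y' M (Nat.lt_succ_self M) = E then 1 else 0))


open Real

theorem sum_mul_div_sum_of_nonneg {ι : Type*} [Fintype ι] {f : ι → ℝ} (hf : ∀ i, 0 ≤ f i)
    (i : ι) : (∑ j, f j) * (f i / ∑ j, f j) = f i :=
  mul_div_cancel_of_imp' fun h =>
    le_antisymm (h ▸ single_le_sum (fun j _ => hf j) (mem_univ i)) (hf i)

theorem mixture_eq_div {s c t x : ℝ} (hB : 1 + s * (x - 1) ≠ 0) :
    (1 + s * (x - 1))⁻¹ * t + (1 - (1 + s * (x - 1))⁻¹) * c =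
      (t + (x - 1) * (s * c)) / (1 + s * (x - 1)) := by
  field_simp
  ring

theorem sum_sq_div_mixture {ι : Type*} [Fintype ι] {c t : ι → ℝ} (r : ℝ) (hc : ∑ k, c k = 1)
    (ht : ∑ k, t k = 1) (hD : ∀ k, (1 - r) * c k + r * t k ≠ 0) :
    ∑ k, c k ^ 2 / ((1 - r) * c k + r * t k) =
      1 + r ^ 2 * ∑ k, (c k - t k) ^ 2 / ((1 - r) * c k + r * t k) := by
  have hterm (k : ι) : c k ^ 2 / ((1 - r) * c k + r * t k) =
      c k + r * (c k - t k) + r ^ 2 * ((c k - t k) ^ 2 / ((1 - r) * c k + r * t k)) := by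
    have hsq : c k ^ 2 = (c k + r * (c k - t k)) * ((1 - r) * c k + r * t k) +
        r ^ 2 * (c k - t k) ^ 2 := by ring
    rw [hsq, add_div, mul_div_cancel_right₀ _ (hD k), mul_div_assoc]
  rw [sum_congr rfl fun k _ => hterm k, sum_add_distrib, sum_add_distrib, ← mul_sum, ← mul_sum,
    sum_sub_distrib, hc, ht]
  ring

section Tilt

variable {Ω : Type*} [Fintype Ω]

noncomputable def expTilt (μ : Ω → ℝ) (A : Ω → Prop) [DecidablePred A] (a : ℝ) (y : Ω) : ℝ :=
  μ y * exp (a * if A y then 1 else 0) / ∑ y', μ y' * exp (a * if A y' then 1 else 0)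

variable {μ : Ω → ℝ} (A : Ω → Prop) [DecidablePred A] (a : ℝ)

theorem sum_mul_exp_ite (hsum : ∑ y, μ y = 1) :
    ∑ y, μ y * exp (a * if A y then 1 else 0) =
      1 + (∑ y, if A y then μ y else 0) * (exp a - 1) := by
  have hterm (y : Ω) : μ y * exp (a * if A y then 1 else 0) =
      μ y + (if A y then μ y else 0) * (exp a - 1) := by
    split_ifs
    · rw [mul_one]; ring
    · simp
  rw [sum_congr rfl fun y _ => hterm y, sum_add_distrib, hsum, sum_mul]

theorem one_add_sum_ite_mul_exp_sub_one_pos (hpos : ∀ y, 0 < μ y) (hsum : ∑ y, μ y = 1) :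
    0 < 1 + (∑ y, if A y then μ y else 0) * (exp a - 1) := by
  rw [← sum_mul_exp_ite A a hsum]
  exact sum_pos (fun y _ => mul_pos (hpos y) (exp_pos _))
    (nonempty_of_sum_ne_zero (hsum ▸ one_ne_zero))

theorem expTilt_pos (hpos : ∀ y, 0 < μ y) (y : Ω) : 0 < expTilt μ A a y :=
  div_pos (mul_pos (hpos y) (exp_pos _))
    (sum_pos (fun y' _ => mul_pos (hpos y') (exp_pos _)) ⟨y, mem_univ y⟩)

theorem sum_ite_expTilt (hsum : ∑ y, μ y = 1) (B : Ω → Prop) [DecidablePred B] :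
    ∑ y, (if B y then expTilt μ A a y else 0) =
      ((∑ y, if B y then μ y else 0) + (exp a - 1) * ∑ y, if B y ∧ A y then μ y else 0) /
        (1 + (∑ y, if A y then μ y else 0) * (exp a - 1)) := by
  simp only [expTilt, sum_mul_exp_ite A a hsum]
  rw [mul_sum, ← sum_add_distrib, sum_div]
  refine sum_congr rfl fun y _ => ?_
  by_cases hB : B y
  · by_cases hA : A y
    · simp only [hB, hA, and_self, if_true, mul_one]; ring
    · simp [hB, hA]
  · simp [hB]

end Tilt

section Window

variable {d T : ℕ} {S : Finset ℕ}

theorem windowLaw_eq_sum_ite (q : (Fin T → Fin d) → ℝ) {l0 : ℕ} (hl : l0 < T) (e : Fin d)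
    (E : {s // s ∈ S} → Fin d) :
    windowLaw d T S q l0 hl (e, E) =
      ∑ x, if x ⟨l0, hl⟩ = e ∧ parents d T S x l0 hl = E then q x else 0 := by
  simp only [windowLaw, window, Prod.mk.injEq]

theorem sum_windowLaw (q : (Fin T → Fin d) → ℝ) {l0 : ℕ} (hl : l0 < T)
    (E : {s // s ∈ S} → Fin d) :
    ∑ e, windowLaw d T S q l0 hl (e, E) = ∑ x, if parents d T S x l0 hl = E then q x else 0 := by
  simp only [windowLaw_eq_sum_ite, ite_and]
  rw [sum_comm]
  simp

theorem windowLaw_nonneg {q : (Fin T → Fin d) → ℝ} (hq : ∀ x, 0 ≤ q x) {l0 : ℕ} (hl : l0 < T)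
    (w : Fin d × ({s // s ∈ S} → Fin d)) : 0 ≤ windowLaw d T S q l0 hl w :=
  sum_nonneg fun x _ => by split_ifs <;> simp [hq x]

end Window

section Reweighting

variable {d M : ℕ}

theorem sum_tokenMarg (q : (Fin (M + 1) → Fin d) → ℝ) : ∑ e, tokenMarg d M q e = ∑ y, q y := by
  simp only [tokenMarg]
  rw [sum_comm]
  simp

theorem tokenMarg_pos {q : (Fin (M + 1) → Fin d) → ℝ} (hq : ∀ y, 0 < q y) (e : Fin d) :
    0 < tokenMarg d M q e :=
  sum_pos' (fun y _ => by split_ifs <;> simp [(hq y).le])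
    ⟨fun _ => e, mem_univ _, by simp [hq]⟩

variable {S : Finset ℕ} {μb : (Fin (M + 1) → Fin d) → ℝ} (a : ℝ) (E : {s // s ∈ S} → Fin d)

theorem rew_eq_expTilt :
    rew d M S a μb E = expTilt μb (fun y => parents d (M + 1) S y M M.lt_succ_self = E) a :=
  rfl

theorem windowLaw_rew (hsum : ∑ y, μb y = 1) (e : Fin d) :
    windowLaw d (M + 1) S (rew d M S a μb E) M M.lt_succ_self (e, E) =
      exp a * windowLaw d (M + 1) S μb M M.lt_succ_self (e, E) /
        (1 + (∑ e', windowLaw d (M + 1) S μb M M.lt_succ_self (e', E)) * (exp a - 1)) := by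
  rw [windowLaw_eq_sum_ite, rew_eq_expTilt, sum_ite_expTilt _ _ hsum, sum_windowLaw,
    windowLaw_eq_sum_ite]
  simp only [and_self_right]
  ring

theorem tokenMarg_rew (hsum : ∑ y, μb y = 1) (e : Fin d) :
    tokenMarg d M (rew d M S a μb E) e =
      (tokenMarg d M μb e + (exp a - 1) * windowLaw d (M + 1) S μb M M.lt_succ_self (e, E)) /
        (1 + (∑ e', windowLaw d (M + 1) S μb M M.lt_succ_self (e', E)) * (exp a - 1)) := by
  rw [tokenMarg, rew_eq_expTilt, sum_ite_expTilt _ _ hsum, sum_windowLaw, windowLaw_eq_sum_ite,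
    tokenMarg]

theorem one_add_sum_windowLaw_mul_exp_sub_one_pos (hpos : ∀ y, 0 < μb y)
    (hsum : ∑ y, μb y = 1) :
    0 < 1 + (∑ e, windowLaw d (M + 1) S μb M M.lt_succ_self (e, E)) * (exp a - 1) := by
  rw [sum_windowLaw]
  exact one_add_sum_ite_mul_exp_sub_one_pos _ a hpos hsum

end Reweighting

theorem statement17_general (d M : ℕ)
    (μb : (Fin (M + 1) → Fin d) → ℝ) (hpos : ∀ y, 0 < μb y) (hsum : ∑ y, μb y = 1)
    (S : Finset ℕ) (a : ℝ) :
    let jm : Fin d → ({s // s ∈ S} → Fin d) → ℝ := fun e E =>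
      windowLaw d (M + 1) S μb M (Nat.lt_succ_self M) (e, E);
    let sm : ({s // s ∈ S} → Fin d) → ℝ := fun E => ∑ e : Fin d, jm e E;
    let tm : Fin d → ℝ := tokenMarg d M μb;
    let cond : Fin d → ({s // s ∈ S} → Fin d) → ℝ := fun e E => jm e E / sm E;
    let rE : ({s // s ∈ S} → Fin d) → ℝ := fun E => (1 + sm E * (Real.exp a - 1))⁻¹;
    let J : ({s // s ∈ S} → Fin d) → ℝ := fun E =>
      ∑ k : Fin d, (cond k E - tm k) ^ 2 / ((1 - rE E) * cond k E + rE E * tm k);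
    (∀ (E : {s // s ∈ S} → Fin d) (e : Fin d),
        tokenMarg d M (rew d M S a μb E) e = rE E * tm e + (1 - rE E) * cond e E) ∧
    (∀ E : {s // s ∈ S} → Fin d,
        (∑ e : Fin d, windowLaw d (M + 1) S (rew d M S a μb E) M (Nat.lt_succ_self M) (e, E))
          = Real.exp a * rE E * sm E) ∧
    (∑ E : {s // s ∈ S} → Fin d, sm E *
        ((∑ k : Fin d,
            cond k E * windowLaw d (M + 1) S (rew d M S a μb E) M (Nat.lt_succ_self M) (k, E) /
              tokenMarg d M (rew d M S a μb E) k) -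
          (∑ e : Fin d, windowLaw d (M + 1) S (rew d M S a μb E) M (Nat.lt_succ_self M) (e, E)))
      = ∑ E : {s // s ∈ S} → Fin d, J E * Real.exp a * rE E ^ 3 * sm E ^ 2) := by
  intro jm sm tm cond rE J
  have hjm (e E) : jm e E = sm E * cond e E :=
    (sum_mul_div_sum_of_nonneg (f := (jm · E))
      (fun _ => windowLaw_nonneg (fun y => (hpos y).le) _ _) e).symm
  have hW (E) (k) : windowLaw d (M + 1) S (rew d M S a μb E) M M.lt_succ_self (k, E) =
      exp a * rE E * jm k E := by
    rw [windowLaw_rew a E hsum]; ring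
  have hi (E) (e) : tokenMarg d M (rew d M S a μb E) e = rE E * tm e + (1 - rE E) * cond e E := by
    rw [tokenMarg_rew a E hsum,
      mixture_eq_div (one_add_sum_windowLaw_mul_exp_sub_one_pos a E hpos hsum).ne', ← hjm]
  have hii (E) : ∑ e, windowLaw d (M + 1) S (rew d M S a μb E) M M.lt_succ_self (e, E) =
      exp a * rE E * sm E := by
    simp only [hW, ← mul_sum]; rfl
  refine ⟨hi, hii, sum_congr rfl fun E _ => ?_⟩
  rcases eq_or_ne (sm E) 0 with hs | hs
  · simp [hs]
  have hD (k) : (1 - rE E) * cond k E + rE E * tm k ≠ 0 := by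
    rw [add_comm, ← hi]
    exact (tokenMarg_pos (expTilt_pos _ a hpos) k).ne'
  have hcond : ∑ k, cond k E = 1 := by rw [← sum_div]; exact div_self hs
  have hterm (k) : cond k E * windowLaw d (M + 1) S (rew d M S a μb E) M M.lt_succ_self (k, E) /
      tokenMarg d M (rew d M S a μb E) k =
      exp a * rE E * sm E * (cond k E ^ 2 / ((1 - rE E) * cond k E + rE E * tm k)) := by
    rw [hW, hi, hjm, add_comm (rE E * tm k)]; ring
  rw [sum_congr rfl fun k _ => hterm k, ← mul_sum,
    sum_sq_div_mixture _ hcond (sum_tokenMarg μb ▸ hsum) hD, hii]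
  ring

/-- Identities for the reweighted distribution `μ̃_E`:
(i) its token marginal is the mixture `r(E)·μ(z=·) + (1−r(E))·μ(z=· | Z_{-S*}=E)`;
(ii) `μ̃_E(Z_{-S*}=E) = e^a r(E) μ(Z_{-S*}=E)`; (iii) the gradient-signal identity
`Σ_E μ(Z_{-S*}=E)[Σ_k μ(z=e_k|E)·μ̃_E(z=e_k,Z_{-S*}=E)/μ̃_E(z=e_k) − μ̃_E(Z_{-S*}=E)]
  = Σ_E J(E) e^a r(E)³ μ(Z_{-S*}=E)²`. -/
theorem statement17 (d M : ℕ) (hd : 0 < d) (hM : 0 < M)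
    (μb : (Fin (M + 1) → Fin d) → ℝ) (hpos : ∀ y, 0 < μb y) (hsum : ∑ y, μb y = 1)
    (S : Finset ℕ) (hS : ∀ s ∈ S, 1 ≤ s ∧ s ≤ M) (a : ℝ) :
    let jm : Fin d → ({s // s ∈ S} → Fin d) → ℝ := fun e E =>
      windowLaw d (M + 1) S μb M (Nat.lt_succ_self M) (e, E);
    let sm : ({s // s ∈ S} → Fin d) → ℝ := fun E => ∑ e : Fin d, jm e E;
    let tm : Fin d → ℝ := tokenMarg d M μb;
    let cond : Fin d → ({s // s ∈ S} → Fin d) → ℝ := fun e E => jm e E / sm E;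
    let rE : ({s // s ∈ S} → Fin d) → ℝ := fun E => (1 + sm E * (Real.exp a - 1))⁻¹;
    let J : ({s // s ∈ S} → Fin d) → ℝ := fun E =>
      ∑ k : Fin d, (cond k E - tm k) ^ 2 / ((1 - rE E) * cond k E + rE E * tm k);
    (∀ (E : {s // s ∈ S} → Fin d) (e : Fin d),
        tokenMarg d M (rew d M S a μb E) e = rE E * tm e + (1 - rE E) * cond e E) ∧
    (∀ E : {s // s ∈ S} → Fin d,
        (∑ e : Fin d, windowLaw d (M + 1) S (rew d M S a μb E) M (Nat.lt_succ_self M) (e, E))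
          = Real.exp a * rE E * sm E) ∧
    (∑ E : {s // s ∈ S} → Fin d, sm E *
        ((∑ k : Fin d,
            cond k E * windowLaw d (M + 1) S (rew d M S a μb E) M (Nat.lt_succ_self M) (k, E) /
              tokenMarg d M (rew d M S a μb E) k) -
          (∑ e : Fin d, windowLaw d (M + 1) S (rew d M S a μb E) M (Nat.lt_succ_self M) (e, E)))
      = ∑ E : {s // s ∈ S} → Fin d, J E * Real.exp a * rE E ^ 3 * sm E ^ 2) :=
  statement17_general d M μb hpos hsum S a
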